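/- arXiv:1301.6362 — 4 statements merged into one kernel-verified Lean document; each statement's English description precedes it below -/
import Mathlib

section
/- The injection distance d_I(U,V) = max(dim U, dim V) - dim(U ∩ V) is a metric on the set of subspaces of a finite-dimensional vector space. -/
/-!
The quantity `dim (U ∩ V)` is bounded by both `dim U` and `dim V`, with equality exactly when the
intersection is the whole subspace; this gives nonnegativity and identity of indiscernibles.
For the triangle inequality, `U ∩ X` and `X ∩ V` both lie in `X` and meet inside `U ∩ V`, so
Grassmann's formula gives `dim (U ∩ X) + dim (X ∩ V) ≤ dim X + dim (U ∩ V)`; combined with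
`max (u, v) + x ≤ max (u, x) + max (x, v)` this is exactly `d_I(U,V) ≤ d_I(U,X) + d_I(X,V)`.
-/

/-- The injection distance between two subspaces, as an integer. -/
noncomputable def injectionDist {K : Type*} [Field K] {W : Type*} [AddCommGroup W]
    [Module K W] (U V : Submodule K W) : ℤ :=
  max (Module.finrank K U) (Module.finrank K V) - Module.finrank K ↥(U ⊓ V)

open Module Submodule

theorem Submodule.finrank_inf_add_finrank_inf_le {K W : Type*} [DivisionRing K] [AddCommGroup W]
    [Module K W] [FiniteDimensional K W] (U V X : Submodule K W) :
    finrank K ↥(U ⊓ X) + finrank K ↥(X ⊓ V) ≤ finrank K X + finrank K ↥(U ⊓ V) := by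
  have hsup : finrank K ↥(U ⊓ X ⊔ X ⊓ V) ≤ finrank K X :=
    finrank_mono (sup_le inf_le_right inf_le_left)
  have hinf : finrank K ↥(U ⊓ X ⊓ (X ⊓ V)) ≤ finrank K ↥(U ⊓ V) :=
    finrank_mono (inf_le_inf inf_le_left inf_le_right)
  have hgrassmann := finrank_sup_add_finrank_inf_eq (U ⊓ X) (X ⊓ V)
  omega

theorem max_add_le_max_add_max {α : Type*} [AddCommMonoid α] [LinearOrder α] [IsOrderedAddMonoid α]
    (a b c : α) : max a b + c ≤ max a c + max c b := by
  rcases le_total a b with h | h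
  · rw [max_eq_right h, add_comm]
    exact add_le_add (le_max_right a c) (le_max_right c b)
  · rw [max_eq_left h]
    exact add_le_add (le_max_left a c) (le_max_left c b)

section InjectionDist

variable {K W : Type*} [Field K] [AddCommGroup W] [Module K W]

theorem injectionDist_comm (U V : Submodule K W) : injectionDist U V = injectionDist V U := by
  rw [injectionDist, injectionDist, inf_comm, max_comm]

theorem injectionDist_self (U : Submodule K W) : injectionDist U U = 0 := by
  rw [injectionDist, inf_idem, max_self, sub_self]

variable [FiniteDimensional K W]

theorem injectionDist_nonneg (U V : Submodule K W) : 0 ≤ injectionDist U V := by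
  have : finrank K ↥(U ⊓ V) ≤ finrank K U := finrank_mono inf_le_left
  unfold injectionDist
  omega

theorem injectionDist_eq_zero_iff {U V : Submodule K W} : injectionDist U V = 0 ↔ U = V := by
  refine ⟨fun h ↦ ?_, fun h ↦ h ▸ injectionDist_self U⟩
  have hU : finrank K ↥(U ⊓ V) ≤ finrank K U := finrank_mono inf_le_left
  have hV : finrank K ↥(U ⊓ V) ≤ finrank K V := finrank_mono inf_le_right
  unfold injectionDist at h
  have hinf_eq_U : U ⊓ V = U := eq_of_le_of_finrank_eq inf_le_left (by omega)
  have hinf_eq_V : U ⊓ V = V := eq_of_le_of_finrank_eq inf_le_right (by omega)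
  rw [← hinf_eq_U, hinf_eq_V]

theorem injectionDist_triangle (U V X : Submodule K W) :
    injectionDist U V ≤ injectionDist U X + injectionDist X V := by
  have hdim := finrank_inf_add_finrank_inf_le U V X
  have hmax := max_add_le_max_add_max (finrank K U : ℤ) (finrank K V) (finrank K X)
  unfold injectionDist
  omega

end InjectionDist

theorem injection_distance_is_metric
    {K : Type*} [Field K] {W : Type*} [AddCommGroup W] [Module K W]
    [FiniteDimensional K W] :
    (∀ U V : Submodule K W, 0 ≤ injectionDist U V) ∧
    (∀ U V : Submodule K W, injectionDist U V = injectionDist V U) ∧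
    (∀ U V : Submodule K W, injectionDist U V = 0 ↔ U = V) ∧
    (∀ U V X : Submodule K W, injectionDist U V ≤ injectionDist U X + injectionDist X V) :=
  ⟨injectionDist_nonneg, injectionDist_comm, fun _ _ ↦ injectionDist_eq_zero_iff,
    injectionDist_triangle⟩
end

section
/- If U and V are subspaces of F_q^n spanned by the rows of matrices in reduced row echelon form whose pivot (leading-one) column index sets are A and B respectively, then dim(U ∩ V) ≤ (dim U + dim V - |A Δ B|)/2, where A Δ B denotes the symmetric difference. -/
open Finset

/-- A matrix is in reduced row echelon form with pivot (leading-one) column of row `i`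
given by `p i`. -/
def IsRREF {F : Type*} [Field F] {k n : ℕ}
    (M : Matrix (Fin k) (Fin n) F) (p : Fin k → Fin n) : Prop :=
  StrictMono p ∧
  (∀ i, M i (p i) = 1) ∧
  (∀ i (j : Fin n), (j : ℕ) < (p i : ℕ) → M i j = 0) ∧
  (∀ i i', i' ≠ i → M i' (p i) = 0)

/-! In the row space of an RREF matrix, the first nonzero coordinate of a nonzero vector is a
pivot. So for a nonzero vector of `U ∩ V` it lies in `A ∩ B`, and restricting to the coordinates
in `A ∩ B` is injective on `U ∩ V`. Hence
`dim (U ∩ V) ≤ |A ∩ B| = (|A| + |B| - |A ∆ B|) / 2`. -/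

theorem Finset.card_symmDiff_add_two_mul_card_inter {α : Type*} [DecidableEq α]
    (s t : Finset α) : #(symmDiff s t) + 2 * #(s ∩ t) = #s + #t := by
  have hsub : s ∩ t ⊆ s ∪ t := inter_subset_union
  rw [symmDiff_eq_sup_sdiff_inf, sup_eq_union, inf_eq_inter, card_sdiff_of_subset hsub,
    ← card_union_add_card_inter s t]
  have := card_le_card hsub
  omega

theorem Submodule.finrank_le_card_of_forall_mem_eq_zero
    {F ι : Type*} [Field F] [Fintype ι] {W : Submodule F (ι → F)} (s : Finset ι)
    (h : ∀ x ∈ W, (∀ i ∈ s, x i = 0) → x = 0) : Module.finrank F W ≤ #s := by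
  let restrict : (ι → F) →ₗ[F] (s → F) := LinearMap.funLeft F F Subtype.val
  have hinj : Function.Injective (restrict ∘ₗ W.subtype) := by
    rw [← LinearMap.ker_eq_bot, LinearMap.ker_eq_bot']
    intro x hx
    exact Subtype.ext <| h x x.2 fun i hi => congrFun hx ⟨i, hi⟩
  simpa [Module.finrank_pi] using LinearMap.finrank_le_finrank_of_injective hinj

namespace IsRREF

variable {F : Type*} [Field F] {k n : ℕ} {M : Matrix (Fin k) (Fin n) F} {p : Fin k → Fin n}

theorem sum_smul_apply_pivot (hM : IsRREF M p) (c : Fin k → F) (i : Fin k) :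
    (∑ j, c j • M j) (p i) = c i := by
  simp only [Finset.sum_apply, Pi.smul_apply, smul_eq_mul]
  rw [Finset.sum_eq_single i (fun j _ hj => by rw [hM.2.2.2 i j hj, mul_zero]) (by simp),
    hM.2.1 i, mul_one]

theorem linearIndependent (hM : IsRREF M p) : LinearIndependent F M :=
  Fintype.linearIndependent_iff.2 fun c hc i => by
    rw [← hM.sum_smul_apply_pivot c i, hc, Pi.zero_apply]

theorem finrank_span (hM : IsRREF M p) :
    Module.finrank F (Submodule.span F (Set.range M)) = k := by
  rw [finrank_span_eq_card hM.linearIndependent, Fintype.card_fin]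

theorem card_image_pivot (hM : IsRREF M p) : #(univ.image p) = k := by
  rw [card_image_of_injective _ hM.1.injective, card_univ, Fintype.card_fin]

theorem sum_smul_apply_eq_zero_of_lt_pivot (hM : IsRREF M p) {c : Fin k → F} {i₀ : Fin k}
    (hc : ∀ i < i₀, c i = 0) {j : Fin n} (hj : j < p i₀) : (∑ i, c i • M i) j = 0 := by
  simp only [Finset.sum_apply, Pi.smul_apply, smul_eq_mul]
  refine Finset.sum_eq_zero fun i _ => ?_
  rcases lt_or_ge i i₀ with h | h
  · rw [hc i h, zero_mul]
  · rw [hM.2.2.1 i j (lt_of_lt_of_le hj (hM.1.monotone h)), mul_zero]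

theorem exists_isLeast_support_eq_pivot (hM : IsRREF M p) {x : Fin n → F}
    (hx : x ∈ Submodule.span F (Set.range M)) (hx₀ : x ≠ 0) :
    ∃ i, IsLeast (Function.support x) (p i) := by
  obtain ⟨c, rfl⟩ := (Submodule.mem_span_range_iff_exists_fun F).1 hx
  have hne : ∃ i, c i ≠ 0 := by
    by_contra! hc
    exact hx₀ (by simp [hc])
  obtain ⟨i₀, hi₀, hmin⟩ := wellFounded_lt.has_min {i | c i ≠ 0} hne
  have hc : ∀ i < i₀, c i = 0 := fun i hi => by_contra fun hci => hmin i hci hi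
  refine ⟨i₀, by rwa [Function.mem_support, hM.sum_smul_apply_pivot], fun j hj => ?_⟩
  exact not_lt.1 fun hlt => hj (hM.sum_smul_apply_eq_zero_of_lt_pivot hc hlt)

end IsRREF

theorem inter_dim_le_of_rref_general
    {F : Type*} [Field F] {n k l : ℕ}
    (M : Matrix (Fin k) (Fin n) F) (N : Matrix (Fin l) (Fin n) F)
    (p : Fin k → Fin n) (q : Fin l → Fin n)
    (hM : IsRREF M p) (hN : IsRREF N q)
    (U V : Submodule F (Fin n → F))
    (hU : U = Submodule.span F (Set.range M))
    (hV : V = Submodule.span F (Set.range N)) :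
    (Module.finrank F ↥(U ⊓ V) : ℚ) ≤
      ((Module.finrank F U : ℚ) + Module.finrank F V
        - (symmDiff (Finset.image p Finset.univ) (Finset.image q Finset.univ)).card) / 2 := by
  classical
  have hinter : Module.finrank F ↥(U ⊓ V) ≤ #(univ.image p ∩ univ.image q) := by
    refine Submodule.finrank_le_card_of_forall_mem_eq_zero _ fun x hx hzero => ?_
    by_contra hx₀
    obtain ⟨hxU, hxV⟩ := Submodule.mem_inf.1 hx
    obtain ⟨i, hi⟩ := hM.exists_isLeast_support_eq_pivot (hU ▸ hxU) hx₀
    obtain ⟨j, hj⟩ := hN.exists_isLeast_support_eq_pivot (hV ▸ hxV) hx₀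
    have hpq : p i ∈ univ.image p ∩ univ.image q :=
      mem_inter.2 ⟨mem_image_of_mem p (mem_univ i),
        hi.unique hj ▸ mem_image_of_mem q (mem_univ j)⟩
    exact hi.1 (hzero _ hpq)
  have hcard := card_symmDiff_add_two_mul_card_inter (univ.image p) (univ.image q)
  rw [hM.card_image_pivot, hN.card_image_pivot] at hcard
  have hk : Module.finrank F U = k := hU ▸ hM.finrank_span
  have hl : Module.finrank F V = l := hV ▸ hN.finrank_span
  rw [hk, hl, le_div_iff₀ two_pos]
  have hcardℚ : (#(symmDiff (univ.image p) (univ.image q)) : ℚ) +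
      2 * #(univ.image p ∩ univ.image q) = k + l := by exact_mod_cast hcard
  have hinterℚ : (Module.finrank F ↥(U ⊓ V) : ℚ) ≤ #(univ.image p ∩ univ.image q) := by
    exact_mod_cast hinter
  linarith

theorem inter_dim_le_of_rref
    {F : Type*} [Field F] [Fintype F] {n k l : ℕ}
    (M : Matrix (Fin k) (Fin n) F) (N : Matrix (Fin l) (Fin n) F)
    (p : Fin k → Fin n) (q : Fin l → Fin n)
    (hM : IsRREF M p) (hN : IsRREF N q)
    (U V : Submodule F (Fin n → F))
    (hU : U = Submodule.span F (Set.range M))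
    (hV : V = Submodule.span F (Set.range N)) :
    (Module.finrank F ↥(U ⊓ V) : ℚ) ≤
      ((Module.finrank F U : ℚ) + Module.finrank F V
        - (symmDiff (Finset.image p Finset.univ) (Finset.image q Finset.univ)).card) / 2 :=
  inter_dim_le_of_rref_general M N p q hM hN U V hU hV
end

section
/- Let G₁, G₂ be d×(n−d) matrices over F_q belonging to an additive group 𝒢 of matrices in which every nonzero element has rank at least r/2. Let C(Gᵢ) = A_α + Gᵢ·A_α^c, where A_α is the d×n Schubert cell matrix with identity in the columns indexed by α and zeros elsewhere, and A_α^c is the (n−d)×n complementary Schubert cell matrix. If G₁ ≠ G₂, then the row spaces of C(G₁) and C(G₂) are d-dimensional subspaces with subspace distance at least r. -/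
/-!
For `x : Fin d → F`, the coordinates of `x ᵥ* C(G)` indexed by `α` are `x` itself and those
indexed by the complement are `x ᵥ* G`. So `C(G)` has full row rank `d`, and a vector lying in
both row spaces is `x ᵥ* C(G₁)` with `x ᵥ* (G₁ - G₂) = 0`. Hence
`dim (U₁ ⊓ U₂) ≤ d - rank (G₁ - G₂)`, and the distance `2d - 2 dim (U₁ ⊓ U₂)` is at least
`2 rank (G₁ - G₂) ≥ r`.
-/

open Function Module

namespace Matrix

variable {K m k ι : Type*} [Field K] [Fintype m] [Fintype k] [DecidableEq ι]

def schubertMatrix (a : m → ι) : Matrix m ι K :=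
  of fun i j => if j = a i then 1 else 0

theorem vecMul_schubertMatrix {a : m → ι} (ha : Injective a) (x : m → K) :
    x ᵥ* schubertMatrix a = extend a x 0 := by
  classical
  funext j
  by_cases hj : ∃ i, a i = j
  · obtain ⟨i, rfl⟩ := hj
    simp [schubertMatrix, vecMul, dotProduct, ha.eq_iff, ha.extend_apply]
  · rw [extend_apply' _ _ _ hj]
    simp only [not_exists] at hj
    simp [schubertMatrix, vecMul, dotProduct, fun i => Ne.symm (hj i)]

/-- The matrix `C(G) = A_α + G A_α^c` of the paper. -/
def schubertCellMatrix (a : m → ι) (b : k → ι) (G : Matrix m k K) : Matrix m ι K :=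
  schubertMatrix a + G * (schubertMatrix b : Matrix k ι K)

section

variable {a : m → ι} {b : k → ι} (ha : Injective a) (hb : Injective b)
  (hab : Disjoint (Set.range a) (Set.range b))
include ha hb

theorem vecMul_schubertCellMatrix (G : Matrix m k K) (x : m → K) :
    x ᵥ* schubertCellMatrix a b G = extend a x 0 + extend b (x ᵥ* G) 0 := by
  rw [schubertCellMatrix, vecMul_add, ← vecMul_vecMul, vecMul_schubertMatrix ha,
    vecMul_schubertMatrix hb]

include hab

theorem vecMul_schubertCellMatrix_comp_left (G : Matrix m k K) (x : m → K) :
    (x ᵥ* schubertCellMatrix a b G) ∘ a = x := by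
  funext i
  have hi : ¬∃ l, b l = a i := fun h => Set.disjoint_left.mp hab ⟨i, rfl⟩ h
  simp [vecMul_schubertCellMatrix ha hb, ha.extend_apply, extend_apply' _ _ _ hi]

theorem vecMul_schubertCellMatrix_comp_right (G : Matrix m k K) (x : m → K) :
    (x ᵥ* schubertCellMatrix a b G) ∘ b = x ᵥ* G := by
  funext l
  have hl : ¬∃ i, a i = b l := fun h => Set.disjoint_right.mp hab ⟨l, rfl⟩ h
  simp [vecMul_schubertCellMatrix ha hb, hb.extend_apply, extend_apply' _ _ _ hl]

theorem finrank_span_schubertCellMatrix (G : Matrix m k K) :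
    finrank K (Submodule.span K (Set.range (schubertCellMatrix a b G).row)) =
      Fintype.card m := by
  have hinj : Injective (schubertCellMatrix a b G).vecMulLinear :=
    LeftInverse.injective (g := (· ∘ a)) (vecMul_schubertCellMatrix_comp_left ha hb hab G)
  rw [← range_vecMulLinear, LinearMap.finrank_range_of_inj hinj, finrank_fintype_fun_eq_card]

theorem span_schubertCellMatrix_inf_le (G₁ G₂ : Matrix m k K) :
    Submodule.span K (Set.range (schubertCellMatrix a b G₁).row) ⊓
        Submodule.span K (Set.range (schubertCellMatrix a b G₂).row) ≤
      (LinearMap.ker (G₁ - G₂).vecMulLinear).map (schubertCellMatrix a b G₁).vecMulLinear := by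
  simp only [← range_vecMulLinear]
  rintro v ⟨⟨x, rfl⟩, ⟨y, hy⟩⟩
  have hxy : y = x := by
    simpa [vecMul_schubertCellMatrix_comp_left ha hb hab] using congrArg (· ∘ a) hy
  have hG : x ᵥ* G₂ = x ᵥ* G₁ := by
    simpa [hxy, vecMul_schubertCellMatrix_comp_right ha hb hab] using congrArg (· ∘ b) hy
  exact ⟨x, by simp [hG], rfl⟩

theorem finrank_inf_add_rank_sub_le (G₁ G₂ : Matrix m k K) :
    finrank K ↥(Submodule.span K (Set.range (schubertCellMatrix a b G₁).row) ⊓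
        Submodule.span K (Set.range (schubertCellMatrix a b G₂).row)) + (G₁ - G₂).rank ≤
      Fintype.card m := by
  have hinf := Submodule.finrank_mono (span_schubertCellMatrix_inf_le ha hb hab G₁ G₂)
  have hmap := Submodule.finrank_map_le (schubertCellMatrix a b G₁).vecMulLinear
    (LinearMap.ker (G₁ - G₂).vecMulLinear)
  have hrank := LinearMap.finrank_range_add_finrank_ker (G₁ - G₂).vecMulLinear
  rw [range_vecMulLinear, ← rank_eq_finrank_span_row, finrank_fintype_fun_eq_card] at hrank
  omega

end

end Matrix

open Matrix

theorem schubert_cell_code_distance_general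
    {F : Type*} [Field F] {n d r : ℕ}
    (a : Fin d → Fin n) (b : Fin (n - d) → Fin n)
    (ha : StrictMono a) (hb : StrictMono b)
    (hcompl : Set.range b = (Set.range a)ᶜ)
    -- the Schubert cell matrix and its complementary Schubert cell matrix
    (Aα : Matrix (Fin d) (Fin n) F) (Aαc : Matrix (Fin (n - d)) (Fin n) F)
    (hAα : Aα = Matrix.of fun i j => if j = a i then 1 else 0)
    (hAαc : Aαc = Matrix.of fun i j => if j = b i then 1 else 0)
    (𝒢 : AddSubgroup (Matrix (Fin d) (Fin (n - d)) F))
    (hrank : ∀ G ∈ 𝒢, G ≠ 0 → (r : ℚ) / 2 ≤ G.rank)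
    (G₁ G₂ : Matrix (Fin d) (Fin (n - d)) F)
    (hG₁ : G₁ ∈ 𝒢) (hG₂ : G₂ ∈ 𝒢) (hne : G₁ ≠ G₂)
    (U₁ U₂ : Submodule F (Fin n → F))
    (hU₁ : U₁ = Submodule.span F (Set.range (Aα + G₁ * Aαc)))
    (hU₂ : U₂ = Submodule.span F (Set.range (Aα + G₂ * Aαc))) :
    Module.finrank F U₁ = d ∧ Module.finrank F U₂ = d ∧
    (r : ℤ) ≤ (Module.finrank F U₁ : ℤ) + Module.finrank F U₂
      - 2 * Module.finrank F ↥(U₁ ⊓ U₂) := by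
  subst hAα hAαc
  obtain rfl : U₁ = Submodule.span F (Set.range (schubertCellMatrix a b G₁).row) := hU₁
  obtain rfl : U₂ = Submodule.span F (Set.range (schubertCellMatrix a b G₂).row) := hU₂
  have hab : Disjoint (Set.range a) (Set.range b) := hcompl ▸ disjoint_compl_right
  have hdim (G : Matrix (Fin d) (Fin (n - d)) F) :
      finrank F (Submodule.span F (Set.range (schubertCellMatrix a b G).row)) = d := by
    simpa using finrank_span_schubertCellMatrix ha.injective hb.injective hab G
  have hinf := finrank_inf_add_rank_sub_le ha.injective hb.injective hab G₁ G₂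
  rw [Fintype.card_fin] at hinf
  have hsep : (r : ℚ) / 2 ≤ (G₁ - G₂).rank := hrank _ (sub_mem hG₁ hG₂) (sub_ne_zero.mpr hne)
  have hr : r ≤ 2 * (G₁ - G₂).rank := by
    exact_mod_cast (by linarith : (r : ℚ) ≤ 2 * (G₁ - G₂).rank)
  refine ⟨hdim G₁, hdim G₂, ?_⟩
  rw [hdim, hdim]
  omega

theorem schubert_cell_code_distance
    {F : Type*} [Field F] [Fintype F] {n d r : ℕ} (hdn : d ≤ n)
    (a : Fin d → Fin n) (b : Fin (n - d) → Fin n)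
    (ha : StrictMono a) (hb : StrictMono b)
    (hcompl : Set.range b = (Set.range a)ᶜ)
    -- the Schubert cell matrix and its complementary Schubert cell matrix
    (Aα : Matrix (Fin d) (Fin n) F) (Aαc : Matrix (Fin (n - d)) (Fin n) F)
    (hAα : Aα = Matrix.of fun i j => if j = a i then 1 else 0)
    (hAαc : Aαc = Matrix.of fun i j => if j = b i then 1 else 0)
    (𝒢 : AddSubgroup (Matrix (Fin d) (Fin (n - d)) F))
    (hrank : ∀ G ∈ 𝒢, G ≠ 0 → (r : ℚ) / 2 ≤ G.rank)
    (G₁ G₂ : Matrix (Fin d) (Fin (n - d)) F)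
    (hG₁ : G₁ ∈ 𝒢) (hG₂ : G₂ ∈ 𝒢) (hne : G₁ ≠ G₂)
    (U₁ U₂ : Submodule F (Fin n → F))
    (hU₁ : U₁ = Submodule.span F (Set.range (Aα + G₁ * Aαc)))
    (hU₂ : U₂ = Submodule.span F (Set.range (Aα + G₂ * Aαc))) :
    Module.finrank F U₁ = d ∧ Module.finrank F U₂ = d ∧
    (r : ℤ) ≤ (Module.finrank F U₁ : ℤ) + Module.finrank F U₂
      - 2 * Module.finrank F ↥(U₁ ⊓ U₂) :=
  schubert_cell_code_distance_general a b ha hb hcompl Aα Aαc hAα hAαc 𝒢 hrank G₁ G₂ hG₁ hG₂ hne U₁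
    U₂ hU₁ hU₂
end

section
/- If 𝒞 ⊆ F_q^{l×m} is a rank-metric code with minimum rank distance δ (i.e., rank(X − Y) ≥ δ for distinct X, Y ∈ 𝒞), then the lifted subspace code I(𝒞) = {rowspace([I_l X]) : X ∈ 𝒞} is a constant-dimension code in the Grassmannian of l-dimensional subspaces of F_q^{l+m} with minimum subspace distance 2δ. -/
/-- The lifting of a matrix `X`: the row space of the block matrix `[I X]`. -/
noncomputable def lifting {F : Type*} [Field F] {l m : ℕ}
    (X : Matrix (Fin l) (Fin m) F) : Submodule F (Fin l ⊕ Fin m → F) :=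
  Submodule.span F (Set.range (Matrix.fromCols (1 : Matrix (Fin l) (Fin l) F) X))

/-!
The vectors of `lifting X` are exactly `c ᵥ* [I X] = (c, c ᵥ* X)`, so `c ↦ c ᵥ* [I X]` is injective
onto `lifting X` and `lifting X` has dimension `l`. A vector `(c, c ᵥ* X)` lies in `lifting Y` iff
`c ᵥ* X = c ᵥ* Y`, so `lifting X ⊓ lifting Y` is the image of the left kernel of `X - Y` and has
dimension `l - rank (X - Y)`. Hence the subspace distance of two liftings is exactly
`2 * rank (X - Y)`.
-/

open Matrix Module LinearMap

theorem Matrix.finrank_ker_vecMulLinear_add_rank {F ι κ : Type*} [Field F] [Fintype ι] [Fintype κ]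
    (A : Matrix ι κ F) : finrank F (ker A.vecMulLinear) + A.rank = Fintype.card ι := by
  rw [rank_eq_finrank_span_row, ← range_vecMulLinear, add_comm,
    finrank_range_add_finrank_ker, finrank_fintype_fun_eq_card]

section Lifting

variable {F : Type*} [Field F] {l m : ℕ}

theorem lifting_eq_range (X : Matrix (Fin l) (Fin m) F) :
    lifting X = range (fromCols (1 : Matrix (Fin l) (Fin l) F) X).vecMulLinear :=
  (range_vecMulLinear _).symm

theorem injective_vecMulLinear_fromCols_one (X : Matrix (Fin l) (Fin m) F) :
    Function.Injective (fromCols (1 : Matrix (Fin l) (Fin l) F) X).vecMulLinear := fun c d h => by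
  simpa [vecMul_fromCols] using congrArg (fun v => v ∘ Sum.inl) h

theorem finrank_lifting (X : Matrix (Fin l) (Fin m) F) : finrank F (lifting X) = l := by
  rw [lifting_eq_range, finrank_range_of_inj (injective_vecMulLinear_fromCols_one X),
    finrank_fin_fun]

theorem lifting_inf_lifting (X Y : Matrix (Fin l) (Fin m) F) :
    lifting X ⊓ lifting Y =
      (ker (X - Y).vecMulLinear).map (fromCols (1 : Matrix (Fin l) (Fin l) F) X).vecMulLinear := by
  ext v
  simp only [lifting_eq_range, Submodule.mem_inf, mem_range, Submodule.mem_map, mem_ker,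
    vecMulLinear_apply, vecMul_fromCols, vecMul_one, vecMul_sub, sub_eq_zero]
  constructor
  · rintro ⟨⟨c, rfl⟩, ⟨d, hd⟩⟩
    obtain ⟨rfl, hXY⟩ := Sum.elim_eq_iff.mp hd
    exact ⟨d, hXY.symm, rfl⟩
  · rintro ⟨c, hXY, rfl⟩
    exact ⟨⟨c, rfl⟩, ⟨c, by rw [hXY]⟩⟩

theorem finrank_lifting_inf_lifting_add_rank (X Y : Matrix (Fin l) (Fin m) F) :
    finrank F ↥(lifting X ⊓ lifting Y) + (X - Y).rank = l := by
  rw [lifting_inf_lifting,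
    ← (Submodule.equivMapOfInjective _ (injective_vecMulLinear_fromCols_one X) _).finrank_eq,
    finrank_ker_vecMulLinear_add_rank, Fintype.card_fin]

theorem subspaceDistance_lifting (X Y : Matrix (Fin l) (Fin m) F) :
    (finrank F (lifting X) : ℤ) + finrank F (lifting Y) - 2 * finrank F ↥(lifting X ⊓ lifting Y)
      = 2 * (X - Y).rank := by
  have := finrank_lifting_inf_lifting_add_rank X Y
  rw [finrank_lifting, finrank_lifting]
  omega

end Lifting

theorem lifted_rank_metric_code_general
    {F : Type*} [Field F] {l m δ : ℕ}
    (𝒞 : Set (Matrix (Fin l) (Fin m) F))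
    (hδ : ∀ X ∈ 𝒞, ∀ Y ∈ 𝒞, X ≠ Y → δ ≤ (X - Y).rank) :
    (∀ X ∈ 𝒞, Module.finrank F (lifting X) = l) ∧
    (∀ X ∈ 𝒞, ∀ Y ∈ 𝒞, X ≠ Y →
      (2 * δ : ℤ) ≤ (Module.finrank F (lifting X) : ℤ) + Module.finrank F (lifting Y)
        - 2 * Module.finrank F ↥(lifting X ⊓ lifting Y)) := by
  refine ⟨fun X _ => finrank_lifting X, fun X hX Y hY hXY => ?_⟩
  rw [subspaceDistance_lifting]
  exact_mod_cast Nat.mul_le_mul_left 2 (hδ X hX Y hY hXY)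

theorem lifted_rank_metric_code
    {F : Type*} [Field F] [Fintype F] {l m δ : ℕ}
    (𝒞 : Set (Matrix (Fin l) (Fin m) F))
    (hδ : ∀ X ∈ 𝒞, ∀ Y ∈ 𝒞, X ≠ Y → δ ≤ (X - Y).rank) :
    (∀ X ∈ 𝒞, Module.finrank F (lifting X) = l) ∧
    (∀ X ∈ 𝒞, ∀ Y ∈ 𝒞, X ≠ Y →
      (2 * δ : ℤ) ≤ (Module.finrank F (lifting X) : ℤ) + Module.finrank F (lifting Y)
        - 2 * Module.finrank F ↥(lifting X ⊓ lifting Y)) :=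
  lifted_rank_metric_code_general 𝒞 hδ
end
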